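/- Shifting lemma (exact solver, vertical strips): Let S be a finite set of points in the Euclidean plane and ℓ a positive integer. For a shift j ∈ {0, 1, …, ℓ-1} and an integer k, let B_{j,k} = {p ∈ S : 2(ℓk + j) ≤ p₁ < 2(ℓ(k+1) + j)}. Then there exists a shift j ∈ {0, 1, …, ℓ-1} such that Σ_k γ_S(B_{j,k}) ≤ (1 + 1/ℓ) · γ_S(S), where the sum ranges over the (finitely many) integers k with B_{j,k} nonempty and γ_S(T) denotes the minimum cardinality of a subset of S that dominates T. -/

import Mathlib

/-! Fix a minimum dominating set `D` of `S`. The block `B_{j,k}` is dominated by the points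
of `D` whose nearest line `x = 2m` satisfies `ℓk + j ≤ m ≤ ℓ(k+1) + j`, since a point within
distance `1` of the block cannot be nearer to a line outside that range. So each point of `D`
is charged to one block of shift `j`, or to two when `m ≡ j (mod ℓ)`, which happens for exactly
one shift. Summed over the `ℓ` shifts the charges total at most `(ℓ + 1)|D|`, so some shift
costs at most `(1 + 1/ℓ)|D|`. -/

/-- The Euclidean plane. -/
abbrev Plane : Type := EuclideanSpace ℝ (Fin 2)

noncomputable instance : DecidableEq Plane := Classical.decEq _

attribute [local instance] Classical.propDecidable

/-- `D` dominates `T` if every point of `T` is within distance `1` of some point of `D`. -/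
def Dominates (D T : Finset Plane) : Prop := ∀ p ∈ T, ∃ q ∈ D, dist p q ≤ 1

/-- `gamma S T` is the minimum cardinality of a subset of `S` that dominates `T`. -/
noncomputable def gamma (S T : Finset Plane) : ℕ :=
  sInf {n : ℕ | ∃ D ⊆ S, Dominates D T ∧ D.card = n}

/-- The `k`-th block of shift `j` of `S` (blocks of `ℓ` consecutive vertical strips of
width `2`): the points `p ∈ S` with `2(ℓk + j) ≤ p₁ < 2(ℓ(k+1) + j)`. -/
noncomputable def block (S : Finset Plane) (ℓ j : ℕ) (k : ℤ) : Finset Plane :=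
  S.filter fun p =>
    2 * ((ℓ : ℝ) * (k : ℝ) + (j : ℝ)) ≤ p 0 ∧ p 0 < 2 * ((ℓ : ℝ) * ((k : ℝ) + 1) + (j : ℝ))

open Finset

lemma gamma_le_card {S T D : Finset Plane} (hD : D ⊆ S) (hdom : Dominates D T) :
    gamma S T ≤ #D :=
  Nat.sInf_le ⟨D, hD, hdom, rfl⟩

lemma exists_dominates_card_eq_gamma {S T : Finset Plane} (hT : T ⊆ S) :
    ∃ D ⊆ S, Dominates D T ∧ #D = gamma S T :=
  Nat.sInf_mem (s := {n | ∃ D ⊆ S, Dominates D T ∧ #D = n})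
    ⟨#T, T, hT, fun p hp => ⟨p, hp, by simp⟩, rfl⟩

section Counting

variable {ℓ : ℤ}

lemma card_filter_mem_window_le (hℓ : 0 < ℓ) (K : Finset ℤ) (a : ℤ) :
    #{k ∈ K | k * ℓ ≤ a ∧ a ≤ (k + 1) * ℓ} ≤ 1 + if ℓ ∣ a then 1 else 0 := by
  have hsub : {k ∈ K | k * ℓ ≤ a ∧ a ≤ (k + 1) * ℓ} ⊆
      {a / ℓ} ∪ (if ℓ ∣ a then {a / ℓ - 1} else ∅) := by
    intro k hk
    obtain ⟨-, hlo, hhi⟩ := mem_filter.1 hk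
    have hk_le : k ≤ a / ℓ := (Int.le_ediv_iff_mul_le hℓ).2 hlo
    have hq_le : a / ℓ ≤ k + 1 :=
      le_of_mul_le_mul_right ((Int.ediv_mul_le a hℓ.ne').trans hhi) hℓ
    rcases hk_le.eq_or_lt with rfl | hlt
    · simp
    · have hk_eq : k = a / ℓ - 1 := by omega
      have hdvd : ℓ ∣ a := ⟨a / ℓ, by
        have := Int.ediv_mul_le a hℓ.ne'
        rw [hk_eq, sub_add_cancel] at hhi
        linarith⟩
      simp [hdvd, hk_eq]
  refine (card_le_card hsub).trans ((card_union_le _ _).trans ?_)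
  split_ifs <;> simp

lemma sum_card_filter_mem_window_le {α : Type*} (hℓ : 0 < ℓ) (K : Finset ℤ) (D : Finset α)
    (a : α → ℤ) :
    ∑ k ∈ K, #{x ∈ D | k * ℓ ≤ a x ∧ a x ≤ (k + 1) * ℓ} ≤ #D + #{x ∈ D | ℓ ∣ a x} := by
  calc ∑ k ∈ K, #{x ∈ D | k * ℓ ≤ a x ∧ a x ≤ (k + 1) * ℓ}
      = ∑ x ∈ D, #{k ∈ K | k * ℓ ≤ a x ∧ a x ≤ (k + 1) * ℓ} :=
        sum_card_bipartiteAbove_eq_sum_card_bipartiteBelow _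
    _ ≤ ∑ x ∈ D, (1 + if ℓ ∣ a x then 1 else 0) :=
        sum_le_sum fun x _ => card_filter_mem_window_le hℓ K (a x)
    _ = #D + #{x ∈ D | ℓ ∣ a x} := by
        rw [sum_add_distrib, card_filter, card_eq_sum_ones]

end Counting

lemma card_filter_range_dvd_sub_le_one (ℓ : ℕ) (m : ℤ) :
    #{j ∈ range ℓ | (ℓ : ℤ) ∣ m - (j : ℕ)} ≤ 1 := by
  have hmod : ∀ j ∈ {j ∈ range ℓ | (ℓ : ℤ) ∣ m - (j : ℕ)}, (j : ℤ) = m % ℓ := by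
    intro j hj
    obtain ⟨hj, hdvd⟩ := mem_filter.1 hj
    rw [← Int.modEq_iff_dvd.2 hdvd]
    exact (Int.emod_eq_of_lt (Int.natCast_nonneg j) (by exact_mod_cast mem_range.1 hj)).symm
  exact card_le_one.2 fun j hj j' hj' => by exact_mod_cast (hmod j hj).trans (hmod j' hj').symm

lemma sum_card_filter_dvd_sub_le {α : Type*} (ℓ : ℕ) (D : Finset α) (m : α → ℤ) :
    ∑ j ∈ range ℓ, #{x ∈ D | (ℓ : ℤ) ∣ m x - (j : ℕ)} ≤ #D := by
  calc ∑ j ∈ range ℓ, #{x ∈ D | (ℓ : ℤ) ∣ m x - (j : ℕ)}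
      = ∑ x ∈ D, #{j ∈ range ℓ | (ℓ : ℤ) ∣ m x - (j : ℕ)} :=
        sum_card_bipartiteAbove_eq_sum_card_bipartiteBelow _
    _ ≤ ∑ _x ∈ D, 1 := sum_le_sum fun x _ => card_filter_range_dvd_sub_le_one ℓ (m x)
    _ = #D := by rw [card_eq_sum_ones]

/-- The index `m` of the vertical line `x = 2m` nearest to `q`. -/
noncomputable def nearestEvenLine (q : Plane) : ℤ := round (q 0 / 2)

lemma nearestEvenLine_sub_mem_window {S : Finset Plane} {ℓ j : ℕ} {k : ℤ} {p q : Plane}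
    (hp : p ∈ block S ℓ j k) (hpq : dist p q ≤ 1) :
    k * ℓ ≤ nearestEvenLine q - j ∧ nearestEvenLine q - j ≤ (k + 1) * ℓ := by
  obtain ⟨-, hlo, hhi⟩ := mem_filter.1 hp
  have hcoord := abs_le.1 ((Real.dist_eq _ _ ▸ PiLp.dist_apply_le p q 0).trans hpq)
  have hround_lo := sub_half_lt_round (q 0 / 2)
  have hround_hi := round_le_add_half (q 0 / 2)
  have h1 : k * ℓ + j - 1 < nearestEvenLine q :=
    Int.cast_lt (R := ℝ).1 (by push_cast [nearestEvenLine]; linarith)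
  have h2 : nearestEvenLine q < (k + 1) * ℓ + j + 1 :=
    Int.cast_lt (R := ℝ).1 (by push_cast [nearestEvenLine]; linarith)
  omega

lemma gamma_block_le {S D : Finset Plane} (hD : D ⊆ S) (hdom : Dominates D S) (ℓ j : ℕ)
    (k : ℤ) :
    gamma S (block S ℓ j k) ≤
      #{q ∈ D | k * ℓ ≤ nearestEvenLine q - j ∧ nearestEvenLine q - j ≤ (k + 1) * ℓ} := by
  refine gamma_le_card ((filter_subset _ _).trans hD) fun p hp => ?_
  obtain ⟨q, hq, hpq⟩ := hdom p (filter_subset _ _ hp)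
  exact ⟨q, mem_filter.2 ⟨hq, nearestEvenLine_sub_mem_window hp hpq⟩, hpq⟩

lemma sum_gamma_block_le {S D : Finset Plane} (hD : D ⊆ S) (hdom : Dominates D S) {ℓ : ℕ}
    (hℓ : 0 < ℓ) (j : ℕ) (K : Finset ℤ) :
    ∑ k ∈ K, gamma S (block S ℓ j k) ≤
      #D + #{q ∈ D | (ℓ : ℤ) ∣ nearestEvenLine q - j} :=
  (sum_le_sum fun k _ => gamma_block_le hD hdom ℓ j k).trans
    (sum_card_filter_mem_window_le (by exact_mod_cast hℓ) K D _)

noncomputable def blockIndex (ℓ j : ℕ) (p : Plane) : ℤ := ⌊(p 0 - 2 * j) / (2 * ℓ)⌋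

lemma mem_block_iff {S : Finset Plane} {ℓ : ℕ} (hℓ : 0 < ℓ) {j : ℕ} {k : ℤ} {p : Plane} :
    p ∈ block S ℓ j k ↔ p ∈ S ∧ blockIndex ℓ j p = k := by
  have h2ℓ : (0 : ℝ) < 2 * ℓ := by positivity
  rw [block, mem_filter, blockIndex, Int.floor_eq_iff, le_div_iff₀ h2ℓ, div_lt_iff₀ h2ℓ]
  constructor <;> rintro ⟨hS, h1, h2⟩ <;> exact ⟨hS, by linarith, by linarith⟩

lemma setOf_block_nonempty_eq {S : Finset Plane} {ℓ : ℕ} (hℓ : 0 < ℓ) (j : ℕ) :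
    {k : ℤ | (block S ℓ j k).Nonempty} = S.image (blockIndex ℓ j) := by
  ext k
  simp [Finset.Nonempty, mem_block_iff hℓ]

/-- Shifting lemma (exact solver, vertical strips): there is a shift `j ∈ {0, …, ℓ-1}` such
that the sum, over the nonempty blocks of shift `j`, of the minimum sizes of dominating sets
is at most `(1 + 1/ℓ) · γ_S(S)`. -/
theorem shifting_lemma_exact (S : Finset Plane) (ℓ : ℕ) (hℓ : 0 < ℓ) :
    ∃ j < ℓ,
      (∑ᶠ k ∈ {k : ℤ | (block S ℓ j k).Nonempty}, (gamma S (block S ℓ j k) : ℝ)) ≤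
        (1 + 1 / (ℓ : ℝ)) * (gamma S S : ℝ) := by
  obtain ⟨D, hDS, hdom, hD⟩ := exists_dominates_card_eq_gamma (subset_refl S)
  set F : ℕ → ℕ := fun j => ∑ k ∈ S.image (blockIndex ℓ j), gamma S (block S ℓ j k)
  have hsum : ∑ j ∈ range ℓ, F j ≤ (ℓ + 1) * #D :=
    calc ∑ j ∈ range ℓ, F j
        ≤ ∑ j ∈ range ℓ, (#D + #{q ∈ D | (ℓ : ℤ) ∣ nearestEvenLine q - j}) :=
          sum_le_sum fun j _ => sum_gamma_block_le hDS hdom hℓ j _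
      _ ≤ ℓ * #D + #D := by
          rw [sum_add_distrib, sum_const, card_range, smul_eq_mul]
          gcongr
          exact sum_card_filter_dvd_sub_le ℓ D nearestEvenLine
      _ = (ℓ + 1) * #D := by ring
  have htotal : ∑ j ∈ range ℓ, ℓ * F j ≤ ∑ _j ∈ range ℓ, (ℓ + 1) * #D := by
    rw [← mul_sum, sum_const, card_range, smul_eq_mul]
    exact Nat.mul_le_mul_left ℓ hsum
  obtain ⟨j, hj, hFj⟩ := exists_le_of_sum_le (nonempty_range_iff.2 hℓ.ne') htotal
  refine ⟨j, mem_range.1 hj, ?_⟩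
  have hℓ' : (0 : ℝ) < ℓ := by exact_mod_cast hℓ
  have hFj' : (ℓ : ℝ) * F j ≤ (ℓ + 1) * #D := by exact_mod_cast hFj
  rw [setOf_block_nonempty_eq hℓ, finsum_mem_coe_finset, ← hD, one_add_div hℓ'.ne',
    div_mul_eq_mul_div, le_div_iff₀ hℓ']
  push_cast [F] at hFj'
  linarith
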